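/- For y > 0 and an integer k ≥ 1, set I_k(y) := y^{(k−1/2)/2}·e^{−y} (this is I_s(y) = y^{(s−1)/2}e^{−y} at s = k + 1/2). For every δ ∈ (0, 2/3] and every A > 0 there exist C > 0 and k₀ such that for all integers k ≥ k₀ and all real h with |h| ≤ A·k^{2/3−δ}, one has |I_k(k/2 − 1/4 + h) − I_k(k/2 − 1/4)·e^{−h²/(k−1/2)}| ≤ C·k^{−3δ}·I_k(k/2 − 1/4)·e^{−h²/(k−1/2)}. -/
import Mathlib
set_option maxHeartbeats 1000000



/-- `I_{k+1/2}(y) = y^{(k−1/2)/2} e^{−y}`. -/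
noncomputable def Ifun (k : ℕ) (y : ℝ) : ℝ := y ^ (((k : ℝ) - 1 / 2) / 2) * Real.exp (-y)

/-- For `|h| ≤ A k^{2/3−δ}` one has
`I_k(k/2 − 1/4 + h) = I_k(k/2 − 1/4) e^{−h²/(k−1/2)} (1 + O(k^{−3δ}))`. -/
theorem Ifun_approx (δ : ℝ) (hδ0 : 0 < δ) (hδ : δ ≤ 2 / 3) (A : ℝ) (hA : 0 < A) :
    ∃ C : ℝ, 0 < C ∧ ∃ k₀ : ℕ, ∀ k : ℕ, k₀ ≤ k → ∀ h : ℝ,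
      |h| ≤ A * (k : ℝ) ^ ((2 : ℝ) / 3 - δ) →
      |Ifun k ((k : ℝ) / 2 - 1 / 4 + h) -
          Ifun k ((k : ℝ) / 2 - 1 / 4) * Real.exp (-h ^ 2 / ((k : ℝ) - 1 / 2))| ≤
        C * (k : ℝ) ^ (-(3 : ℝ) * δ) * Ifun k ((k : ℝ) / 2 - 1 / 4) *
          Real.exp (-h ^ 2 / ((k : ℝ) - 1 / 2)) := by
  set B : ℝ := 32 * A ^ 3 with hBdef
  have hBpos : 0 < B := by positivity
  have hδ3 : 0 < 3 * δ := by linarith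
  refine ⟨2 * B, by positivity,
    ⌈max (512 * A ^ 3) ((max 1 B) ^ (1 / (3 * δ)))⌉₊ + 1, fun k hk h hh => ?_⟩
  have hkR : (⌈max (512 * A ^ 3) ((max 1 B) ^ (1 / (3 * δ)))⌉₊ : ℝ) + 1 ≤ (k : ℝ) := by
    exact_mod_cast Nat.cast_le.mpr hk
  have hmax : max (512 * A ^ 3) ((max 1 B) ^ (1 / (3 * δ))) ≤ (k : ℝ) :=
    le_trans (Nat.le_ceil _) (by linarith)
  have hk512 : 512 * A ^ 3 ≤ (k : ℝ) := le_trans (le_max_left _ _) hmax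
  have hkBc : (max 1 B) ^ (1 / (3 * δ)) ≤ (k : ℝ) := le_trans (le_max_right _ _) hmax
  have hk1 : (1 : ℝ) ≤ (k : ℝ) := by
    have : (0 : ℝ) ≤ (⌈max (512 * A ^ 3) ((max 1 B) ^ (1 / (3 * δ)))⌉₊ : ℝ) := Nat.cast_nonneg _
    linarith
  have hkpos : (0 : ℝ) < (k : ℝ) := by linarith
  -- B * k^(-(3δ)) ≤ 1
  have hkB1 : B * (k : ℝ) ^ (-(3 * δ)) ≤ 1 := by
    have hb0 : (0 : ℝ) ≤ max 1 B := le_trans zero_le_one (le_max_left _ _)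
    have h1 : ((max 1 B) ^ (1 / (3 * δ))) ^ (3 * δ) ≤ (k : ℝ) ^ (3 * δ) :=
      Real.rpow_le_rpow (Real.rpow_nonneg hb0 _) hkBc hδ3.le
    have h2 : ((max 1 B) ^ (1 / (3 * δ))) ^ (3 * δ) = max 1 B := by
      rw [← Real.rpow_mul hb0, one_div, inv_mul_cancel₀ hδ3.ne', Real.rpow_one]
    have hBk : B ≤ (k : ℝ) ^ (3 * δ) := le_trans (le_max_right 1 B) (h2 ▸ h1)
    have hkpow : (0 : ℝ) < (k : ℝ) ^ (3 * δ) := Real.rpow_pos_of_pos hkpos _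
    rw [Real.rpow_neg hkpos.le, ← div_eq_mul_inv]
    exact (div_le_one hkpow).mpr hBk
  set m : ℝ := (k : ℝ) / 2 - 1 / 4 with hmdef
  have hm4 : (k : ℝ) / 4 ≤ m := by rw [hmdef]; linarith
  have hmpos : (0 : ℝ) < m := by rw [hmdef]; linarith
  -- |h| ≤ m/2
  have hk13 : 8 * A ≤ (k : ℝ) ^ ((1 : ℝ) / 3) := by
    have h8 : ((8 * A) ^ (3 : ℕ)) ^ (((3 : ℕ) : ℝ))⁻¹ = 8 * A :=
      Real.pow_rpow_inv_natCast (by positivity) (by norm_num)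
    have : ((8 * A) ^ (3 : ℕ)) ^ (((3 : ℕ) : ℝ))⁻¹ ≤ (k : ℝ) ^ (((3 : ℕ) : ℝ))⁻¹ :=
      Real.rpow_le_rpow (by positivity) (by nlinarith) (by positivity)
    rw [h8] at this
    convert this using 2
    norm_num
  have hh23 : |h| ≤ A * (k : ℝ) ^ ((2 : ℝ) / 3) :=
    le_trans hh (by
      have := Real.rpow_le_rpow_of_exponent_le hk1 (show (2:ℝ)/3 - δ ≤ 2/3 by linarith)
      nlinarith)
  have hsplit : (k : ℝ) ^ ((2 : ℝ) / 3) * (k : ℝ) ^ ((1 : ℝ) / 3) = (k : ℝ) := by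
    rw [← Real.rpow_add hkpos]; norm_num
  have hhm : |h| ≤ m / 2 := by
    have h13pos : (0 : ℝ) < (k : ℝ) ^ ((1 : ℝ) / 3) := Real.rpow_pos_of_pos hkpos _
    have h23le : (k : ℝ) ^ ((2 : ℝ) / 3) ≤ (k : ℝ) / (8 * A) := by
      rw [le_div_iff₀ (by positivity)]
      nlinarith [Real.rpow_pos_of_pos hkpos ((2:ℝ)/3)]
    have : A * (k : ℝ) ^ ((2 : ℝ) / 3) ≤ (k : ℝ) / 8 := by
      rw [div_eq_mul_inv] at h23le ⊢
      nlinarith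
    linarith [hh23, hm4]
  -- ratio t = h/m
  have htm : |h / m| ≤ 1 / 2 := by
    rw [abs_div, abs_of_pos hmpos, div_le_iff₀ hmpos]
    linarith
  have h1t : (0 : ℝ) < 1 + h / m := by
    have := neg_abs_le (h / m); linarith
  -- Taylor estimate for log
  have hlog := Real.abs_log_sub_add_sum_range_le (x := -(h / m))
    (by rw [abs_neg]; linarith) 2
  rw [show (∑ i ∈ Finset.range 2, (-(h / m)) ^ (i + 1) / (i + 1)) = -(h / m) + (h / m) ^ 2 / 2
      by simp [Finset.sum_range_succ]; ring,
    show (1 : ℝ) - -(h / m) = 1 + h / m by ring, abs_neg] at hlog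
  set E : ℝ := m * Real.log (1 + h / m) - h + h ^ 2 / (2 * m) with hEdef
  have hEeq : E = m * ((-(h / m) + (h / m) ^ 2 / 2) + Real.log (1 + h / m)) := by
    rw [hEdef]; have := hmpos.ne'; field_simp; ring
  have habs : |E| ≤ 2 * |h| ^ 3 / m ^ 2 := by
    rw [hEeq, abs_mul, abs_of_pos hmpos]
    have hb : |(-(h / m) + (h / m) ^ 2 / 2) + Real.log (1 + h / m)| ≤ 2 * |h / m| ^ 3 := by
      refine le_trans hlog ?_
      rw [div_le_iff₀ (by linarith)]
      nlinarith [abs_nonneg (h / m), pow_nonneg (abs_nonneg (h / m)) 3]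
    calc m * |(-(h / m) + (h / m) ^ 2 / 2) + Real.log (1 + h / m)|
        ≤ m * (2 * |h / m| ^ 3) := mul_le_mul_of_nonneg_left hb hmpos.le
      _ = 2 * |h| ^ 3 / m ^ 2 := by
          rw [abs_div, abs_of_pos hmpos]; field_simp
  have hX : (0 : ℝ) < (k : ℝ) ^ (-(3 * δ)) := Real.rpow_pos_of_pos hkpos _
  have hE : |E| ≤ B * (k : ℝ) ^ (-(3 * δ)) := by
    have hh3 : |h| ^ 3 ≤ A ^ 3 * ((k : ℝ) ^ 2 * (k : ℝ) ^ (-(3 * δ))) := by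
      have e1 : ((k : ℝ) ^ ((2 : ℝ) / 3 - δ)) ^ (3 : ℕ)
          = (k : ℝ) ^ 2 * (k : ℝ) ^ (-(3 * δ)) := by
        rw [← Real.rpow_natCast ((k : ℝ) ^ ((2 : ℝ) / 3 - δ)) 3, ← Real.rpow_mul hkpos.le,
          show ((2 : ℝ) / 3 - δ) * ((3 : ℕ) : ℝ) = 2 + -(3 * δ) by push_cast; ring,
          Real.rpow_add hkpos, Real.rpow_two]
      calc |h| ^ 3 ≤ (A * (k : ℝ) ^ ((2 : ℝ) / 3 - δ)) ^ 3 :=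
            pow_le_pow_left₀ (abs_nonneg h) hh 3
        _ = A ^ 3 * ((k : ℝ) ^ ((2 : ℝ) / 3 - δ)) ^ (3 : ℕ) := by ring
        _ = _ := by rw [e1]
    have hm2 : (k : ℝ) ^ 2 / 16 ≤ m ^ 2 := by nlinarith
    refine le_trans habs ?_
    rw [div_le_iff₀ (by positivity)]
    calc 2 * |h| ^ 3 ≤ 2 * (A ^ 3 * ((k : ℝ) ^ 2 * (k : ℝ) ^ (-(3 * δ)))) := by linarith
      _ = (32 * A ^ 3 * (k : ℝ) ^ (-(3 * δ))) * ((k : ℝ) ^ 2 / 16) := by ring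
      _ ≤ (32 * A ^ 3 * (k : ℝ) ^ (-(3 * δ))) * m ^ 2 :=
          mul_le_mul_of_nonneg_left hm2 (by positivity)
      _ = B * (k : ℝ) ^ (-(3 * δ)) * m ^ 2 := by rw [hBdef]
  have hexp : |Real.exp E - 1| ≤ 2 * |E| :=
    Real.abs_exp_sub_one_le (le_trans hE hkB1)
  -- key identity
  have hk2m : (k : ℝ) - 1 / 2 = 2 * m := by rw [hmdef]; ring
  have hiden : Ifun k (m + h)
      = Ifun k m * Real.exp (-h ^ 2 / ((k : ℝ) - 1 / 2)) * Real.exp E := by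
    unfold Ifun
    rw [show ((k : ℝ) - 1 / 2) / 2 = m by rw [hmdef]; ring,
      show m + h = m * (1 + h / m) by have := hmpos.ne'; field_simp,
      Real.mul_rpow hmpos.le h1t.le, Real.rpow_def_of_pos h1t, hk2m,
      mul_assoc, mul_assoc, mul_assoc, ← Real.exp_add, ← Real.exp_add, ← Real.exp_add]
    congr 2
    rw [hEdef]
    have := hmpos.ne'
    field_simp
    ring
  rw [hiden]
  have hIpos : 0 < Ifun k m * Real.exp (-h ^ 2 / ((k : ℝ) - 1 / 2)) :=
    mul_pos (mul_pos (Real.rpow_pos_of_pos hmpos _) (Real.exp_pos _)) (Real.exp_pos _)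
  rw [show Ifun k m * Real.exp (-h ^ 2 / ((k : ℝ) - 1 / 2)) * Real.exp E -
        Ifun k m * Real.exp (-h ^ 2 / ((k : ℝ) - 1 / 2))
      = (Ifun k m * Real.exp (-h ^ 2 / ((k : ℝ) - 1 / 2))) * (Real.exp E - 1) by ring,
    abs_mul, abs_of_pos hIpos]
  calc (Ifun k m * Real.exp (-h ^ 2 / ((k : ℝ) - 1 / 2))) * |Real.exp E - 1|
      ≤ (Ifun k m * Real.exp (-h ^ 2 / ((k : ℝ) - 1 / 2))) * (2 * (B * (k : ℝ) ^ (-(3 * δ)))) :=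
        mul_le_mul_of_nonneg_left (le_trans hexp (by linarith)) hIpos.le
    _ = 2 * B * (k : ℝ) ^ (-(3 * δ)) * Ifun k m * Real.exp (-h ^ 2 / ((k : ℝ) - 1 / 2)) := by
        ring
    _ = 2 * B * (k : ℝ) ^ (-(3 : ℝ) * δ) * Ifun k m * Real.exp (-h ^ 2 / ((k : ℝ) - 1 / 2)) := by
        rw [neg_mul]
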